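/- arXiv:2502.13273 — 4 statements merged into one kernel-verified Lean document; each statement's English description precedes it below -/
import Mathlib

section
/- Let F be a field, let R be a nonzero commutative F-algebra, and let f(x) ∈ R[x] be a monic polynomial of degree n. For any integer k ≥ 0, the F-vector-space dimension of the universal factor ring R_{f,k} satisfies dim_F(R_{f,k}) = C(n,k) · dim_F(R), where C(n,k) is the binomial coefficient (which is 0 when k > n). -/
open Polynomial

/-- The generic monic polynomial `g(x) = x^k + b_{k-1} x^{k-1} + ⋯ + b_0` of degree `k`,
with coefficients the indeterminates `b_j = MvPolynomial.X j` over `R`. -/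
noncomputable abbrev genericMonic (R : Type*) [CommRing R] (k : ℕ) :
    Polynomial (MvPolynomial (Fin k) R) :=
  Polynomial.X ^ k + ∑ j : Fin k, Polynomial.C (MvPolynomial.X j) * Polynomial.X ^ (j : ℕ)

/-- The ideal `I` of `R[b_0,…,b_{k-1}]` generated by the coefficients of the remainder
upon long division of (the image of) `f` by the generic monic polynomial of degree `k`. -/
noncomputable abbrev univRemainderIdeal (R : Type*) [CommRing R] (f : Polynomial R) (k : ℕ) :
    Ideal (MvPolynomial (Fin k) R) :=
  Ideal.span (Set.range fun i : ℕ =>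
    ((f.map (algebraMap R (MvPolynomial (Fin k) R))) %ₘ genericMonic R k).coeff i)

/-- `R_{f,k}`: the universal `R`-algebra adjunction of a monic degree-`k` factor of `f`. -/
noncomputable abbrev UniversalFactorRing (R : Type*) [CommRing R] (f : Polynomial R) (k : ℕ) :=
  MvPolynomial (Fin k) R ⧸ univRemainderIdeal R f k

/-!
Induction on `k`, letting `R` and `f` vary. Let `n = deg f`, let `g` be the universal factor over
`Q = R_{f,k+1}` and let `R[α] = R[x]/(f)`. Then `Q[x]/(g)` and `(R[α])_{f/(x-α),k}` are isomorphic
`R`-algebras: a homomorphism out of either amounts to a root `a` of `f` together with a monic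
polynomial `h` of degree `k` such that `(x - a) h ∣ f`. Adjoining a root of a monic polynomial of
degree `d` multiplies the `F`-dimension by `d`, so the induction hypothesis gives
`(k + 1) · dim Q = C(n-1, k) · n · dim R = (k + 1) · C(n, k+1) · dim R`, and the nonzero natural
number `k + 1` cancels in cardinal arithmetic. For `k > n` the remainder of `f` by `g` is `f`
itself, whose leading coefficient `1` then lies in the ideal.
-/

lemma rank_adjoinRoot (F : Type*) [Field F] {S : Type*} [CommRing S] [Algebra F S] {g : S[X]}
    (hg : g.Monic) : Module.rank F (AdjoinRoot g) = g.natDegree * Module.rank F S := by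
  rcases subsingleton_or_nontrivial S with hS | hS
  · have : Subsingleton (AdjoinRoot g) := AdjoinRoot.mk_surjective.subsingleton
    simp
  have := hg.free_adjoinRoot
  rw [← rank_mul_rank F S (AdjoinRoot g), rank_eq_card_basis (AdjoinRoot.powerBasis' hg).basis,
    mul_comm]
  simp

lemma degree_X_pow_add_sum_C_mul_X_pow {S : Type*} [CommRing S] [Nontrivial S] {k : ℕ}
    (c : Fin k → S) : (X ^ k + ∑ j : Fin k, C (c j) * X ^ (j : ℕ)).degree = k :=
  (degree_add_eq_left_of_degree_lt (by simpa using degree_sum_fin_lt c)).trans (degree_X_pow k)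

section GenericMonic

variable {R S : Type*} [CommRing R] [CommRing S]

lemma monic_genericMonic (k : ℕ) : (genericMonic R k).Monic :=
  monic_X_pow_add (degree_sum_fin_lt _)

lemma map_genericMonic {k : ℕ} (φ : MvPolynomial (Fin k) R →+* S) :
    (genericMonic R k).map φ = X ^ k + ∑ j : Fin k, C (φ (MvPolynomial.X j)) * X ^ (j : ℕ) := by
  simp [Polynomial.map_sum]

lemma map_genericMonic_eval₂Hom_coeff (i : R →+* S) {g : S[X]} (hg : g.Monic) :
    (genericMonic R g.natDegree).map (MvPolynomial.eval₂Hom i fun j : Fin _ => g.coeff j) = g := by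
  rw [map_genericMonic]
  conv_rhs => rw [hg.as_sum, ← Fin.sum_univ_eq_sum_range (fun j => C (g.coeff j) * X ^ j)]
  simp

lemma univRemainderIdeal_le_ker {f : R[X]} {k : ℕ} (φ : MvPolynomial (Fin k) R →+* S)
    (h : (genericMonic R k).map φ ∣ f.map (φ.comp MvPolynomial.C)) :
    univRemainderIdeal R f k ≤ RingHom.ker φ := by
  have hrem : ((f.map (algebraMap R (MvPolynomial (Fin k) R))) %ₘ genericMonic R k).map φ = 0 := by
    rw [map_modByMonic φ (monic_genericMonic k), Polynomial.map_map]
    exact (modByMonic_eq_zero_iff_dvd ((monic_genericMonic k).map φ)).2 h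
  refine Ideal.span_le.2 ?_
  rintro _ ⟨i, rfl⟩
  simpa using congr_arg (coeff · i) hrem

end GenericMonic

namespace UniversalFactorRing

variable {R : Type*} [CommRing R] (f : R[X]) (k : ℕ)

noncomputable def factor : (UniversalFactorRing R f k)[X] :=
  (genericMonic R k).map (Ideal.Quotient.mk _)

lemma factor_eq : factor f k = X ^ k + ∑ j : Fin k,
    C (Ideal.Quotient.mk (univRemainderIdeal R f k) (MvPolynomial.X j)) * X ^ (j : ℕ) :=
  map_genericMonic _

lemma monic_factor : (factor f k).Monic :=
  (monic_genericMonic k).map _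

lemma natDegree_factor [Nontrivial (UniversalFactorRing R f k)] : (factor f k).natDegree = k :=
  natDegree_eq_of_degree_eq_some (factor_eq f k ▸ degree_X_pow_add_sum_C_mul_X_pow _)

lemma coeff_factor (j : Fin k) :
    (factor f k).coeff j = Ideal.Quotient.mk (univRemainderIdeal R f k) (MvPolynomial.X j) := by
  simp [factor_eq, coeff_X_pow, j.2.ne, Fin.val_eq_val]

lemma factor_dvd : factor f k ∣ f.map (algebraMap R (UniversalFactorRing R f k)) := by
  set fA := f.map (algebraMap R (MvPolynomial (Fin k) R))
  have hrem : (fA %ₘ genericMonic R k).map (Ideal.Quotient.mk (univRemainderIdeal R f k)) = 0 := by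
    ext i
    rw [coeff_map, coeff_zero, Ideal.Quotient.eq_zero_iff_mem]
    exact Ideal.subset_span ⟨i, rfl⟩
  refine ⟨(fA /ₘ genericMonic R k).map (Ideal.Quotient.mk _), ?_⟩
  have hdiv := congr_arg (Polynomial.map (Ideal.Quotient.mk (univRemainderIdeal R f k)))
    (modByMonic_add_div fA (genericMonic R k))
  rwa [Polynomial.map_add, hrem, zero_add, Polynomial.map_mul, Polynomial.map_map,
    Ideal.Quotient.mk_comp_algebraMap, eq_comm] at hdiv

lemma univRemainderIdeal_zero : univRemainderIdeal R f 0 = ⊥ := by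
  simp [univRemainderIdeal, genericMonic, modByMonic_one]

lemma rank_zero (F : Type*) [Field F] [Algebra F R] :
    Module.rank F (UniversalFactorRing R f 0) = Module.rank F R :=
  (((Ideal.quotientEquivAlgOfEq R (univRemainderIdeal_zero f)).trans
    ((AlgEquiv.quotientBot R _).trans (MvPolynomial.isEmptyAlgEquiv R (Fin 0)))).restrictScalars
      F).toLinearEquiv.rank_eq

variable {S : Type*} [CommRing S] {f k}

lemma subsingleton_of_natDegree_lt [Nontrivial R] (hf : f.Monic)
    (hk : f.natDegree < k) : Subsingleton (UniversalFactorRing R f k) := by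
  have hmod : f.map (algebraMap R (MvPolynomial (Fin k) R)) %ₘ genericMonic R k =
      f.map (algebraMap R _) := by
    refine (modByMonic_eq_self_iff (monic_genericMonic k)).2 ?_
    rw [degree_X_pow_add_sum_C_mul_X_pow]
    exact degree_map_le.trans_lt (degree_le_natDegree.trans_lt (by exact_mod_cast hk))
  refine Ideal.Quotient.subsingleton_iff.2 ((Ideal.eq_top_iff_one _).2 ?_)
  refine Ideal.subset_span ⟨f.natDegree, ?_⟩
  simp only [hmod, coeff_map, hf.coeff_natDegree, map_one]

noncomputable def lift (i : R →+* S) (g : S[X]) (hg : g.Monic) (hdeg : g.natDegree = k)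
    (hdvd : g ∣ f.map i) : UniversalFactorRing R f k →+* S :=
  Ideal.Quotient.lift _ (MvPolynomial.eval₂Hom i fun j : Fin k => g.coeff j) fun _ ha =>
    RingHom.mem_ker.mp <| univRemainderIdeal_le_ker _ (by
      subst hdeg
      rwa [map_genericMonic_eval₂Hom_coeff i hg, MvPolynomial.eval₂Hom_comp_C]) ha

variable (i : R →+* S) (g : S[X]) (hg : g.Monic) (hdeg : g.natDegree = k) (hdvd : g ∣ f.map i)

lemma lift_algebraMap (r : R) :
    lift i g hg hdeg hdvd (algebraMap R (UniversalFactorRing R f k) r) = i r := by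
  rw [← Ideal.Quotient.mk_algebraMap, MvPolynomial.algebraMap_eq]
  simp [lift]

lemma lift_comp_algebraMap : (lift i g hg hdeg hdvd).comp (algebraMap R _) = i :=
  RingHom.ext (lift_algebraMap i g hg hdeg hdvd)

lemma map_factor_lift : (factor f k).map (lift i g hg hdeg hdvd) = g := by
  subst hdeg
  rw [factor, Polynomial.map_map, lift, Ideal.Quotient.lift_comp_mk,
    map_genericMonic_eval₂Hom_coeff i hg]

lemma ringHom_ext {φ ψ : UniversalFactorRing R f k →+* S}
    (hC : φ.comp (algebraMap R _) = ψ.comp (algebraMap R _))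
    (hfactor : (factor f k).map φ = (factor f k).map ψ) : φ = ψ := by
  refine Ideal.Quotient.ringHom_ext (MvPolynomial.ringHom_ext (fun r => congr($hC r)) fun j => ?_)
  simpa [coeff_factor] using congr(($hfactor).coeff j)

end UniversalFactorRing

section DivXSubRoot
variable {R : Type*} [CommRing R] (f : R[X])

noncomputable def divXSubRoot : (AdjoinRoot f)[X] :=
  f.map (AdjoinRoot.of f) /ₘ (X - C (AdjoinRoot.root f))

lemma X_sub_C_root_mul_divXSubRoot :
    (X - C (AdjoinRoot.root f)) * divXSubRoot f = f.map (AdjoinRoot.of f) :=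
  mul_divByMonic_eq_iff_isRoot.2 (AdjoinRoot.isRoot_root f)

variable {f}

lemma monic_divXSubRoot (hf : f.Monic) : (divXSubRoot f).Monic :=
  (monic_X_sub_C _).of_mul_monic_left ((X_sub_C_root_mul_divXSubRoot f).symm ▸ hf.map _)

lemma natDegree_divXSubRoot [Nontrivial (AdjoinRoot f)] (hf : f.Monic) :
    (divXSubRoot f).natDegree = f.natDegree - 1 := by
  have h := congr_arg natDegree (X_sub_C_root_mul_divXSubRoot f)
  rw [(monic_X_sub_C _).natDegree_mul (monic_divXSubRoot hf), natDegree_X_sub_C,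
    hf.natDegree_map] at h
  omega

end DivXSubRoot

namespace UniversalFactorRing

variable {R : Type*} [CommRing R] (f : R[X]) (k : ℕ)

local notation "Q" => UniversalFactorRing R f (k + 1)
local notation "L" => AdjoinRoot (factor f (k + 1))
local notation "T" => UniversalFactorRing (AdjoinRoot f) (divXSubRoot f) k
local notation "α" => algebraMap (AdjoinRoot f) T (AdjoinRoot.root f)
local notation "ξ" => AdjoinRoot.root (factor f (k + 1))

lemma eval₂_root_factor_eq_zero :
    f.eval₂ (algebraMap R L) ξ = 0 := by
  obtain ⟨c, hc⟩ := factor_dvd f (k + 1)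
  rw [IsScalarTower.algebraMap_eq R Q L, ← eval₂_map, hc, eval₂_mul, AdjoinRoot.algebraMap_eq,
    AdjoinRoot.eval₂_root, zero_mul]

noncomputable def adjoinRootMapRoot : AdjoinRoot f →+* L :=
  AdjoinRoot.lift (algebraMap R L) ξ (eval₂_root_factor_eq_zero f k)

lemma divXSubRoot_factor_dvd :
    divXSubRoot (factor f (k + 1)) ∣ (divXSubRoot f).map (adjoinRootMapRoot f k) := by
  obtain ⟨c, hc⟩ := factor_dvd f (k + 1)
  refine ⟨c.map (AdjoinRoot.of _), (monic_X_sub_C ξ).isRegular.left ?_⟩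
  dsimp only
  have hf : (f.map (AdjoinRoot.of f)).map (adjoinRootMapRoot f k) =
      (f.map (algebraMap R Q)).map (AdjoinRoot.of _) := by
    rw [Polynomial.map_map, Polynomial.map_map, adjoinRootMapRoot, AdjoinRoot.lift_comp_of,
      ← AdjoinRoot.algebraMap_eq, ← IsScalarTower.algebraMap_eq]
  rw [← mul_assoc, X_sub_C_root_mul_divXSubRoot, ← Polynomial.map_mul, ← hc, ← hf,
    ← X_sub_C_root_mul_divXSubRoot, Polynomial.map_mul, Polynomial.map_sub, map_X, map_C,
    adjoinRootMapRoot, AdjoinRoot.lift_root]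

lemma X_sub_C_mul_factor_dvd :
    (X - C α) * factor (divXSubRoot f) k ∣ f.map (algebraMap R T) := by
  rw [IsScalarTower.algebraMap_eq R (AdjoinRoot f) T, ← Polynomial.map_map,
    AdjoinRoot.algebraMap_eq, ← X_sub_C_root_mul_divXSubRoot, Polynomial.map_mul,
    Polynomial.map_sub, map_X, map_C]
  exact mul_dvd_mul_left _ (factor_dvd _ _)

-- Over the zero ring every polynomial has degree `0`; nontriviality of `T` is what gives the
-- factors below their expected degrees.
variable [Nontrivial (UniversalFactorRing (AdjoinRoot f) (divXSubRoot f) k)]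

noncomputable def toDivXSubRoot : Q →+* T :=
  lift (algebraMap R T) ((X - C α) * factor (divXSubRoot f) k)
    ((monic_X_sub_C _).mul (monic_factor _ _))
    (by rw [(monic_X_sub_C _).natDegree_mul (monic_factor _ _), natDegree_X_sub_C,
      natDegree_factor, add_comm])
    (X_sub_C_mul_factor_dvd f k)

lemma map_factor_toDivXSubRoot :
    (factor f (k + 1)).map (toDivXSubRoot f k) = (X - C α) * factor (divXSubRoot f) k :=
  map_factor_lift ..

noncomputable def adjoinRootToDivXSubRoot : L →+* T :=
  AdjoinRoot.lift (toDivXSubRoot f k) α (by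
    rw [← eval_map, map_factor_toDivXSubRoot, eval_mul, eval_sub, eval_X, eval_C, sub_self,
      zero_mul])

noncomputable def divXSubRootToAdjoinRoot : T →+* L :=
  lift (adjoinRootMapRoot f k) (divXSubRoot (factor f (k + 1)))
    (monic_divXSubRoot (monic_factor f (k + 1)))
    (by
      have := (toDivXSubRoot f k).domain_nontrivial
      have := (adjoinRootToDivXSubRoot f k).domain_nontrivial
      rw [natDegree_divXSubRoot (monic_factor f (k + 1)), natDegree_factor, Nat.add_sub_cancel])
    (divXSubRoot_factor_dvd f k)

lemma adjoinRootToDivXSubRoot_comp_of :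
    (adjoinRootToDivXSubRoot f k).comp (AdjoinRoot.of _) = toDivXSubRoot f k :=
  AdjoinRoot.lift_comp_of _

lemma adjoinRootToDivXSubRoot_root : adjoinRootToDivXSubRoot f k ξ = α :=
  AdjoinRoot.lift_root _

lemma divXSubRootToAdjoinRoot_root : divXSubRootToAdjoinRoot f k α = ξ := by
  rw [divXSubRootToAdjoinRoot, lift_algebraMap, adjoinRootMapRoot, AdjoinRoot.lift_root]

lemma map_factor_divXSubRootToAdjoinRoot :
    (factor (divXSubRoot f) k).map (divXSubRootToAdjoinRoot f k) = divXSubRoot (factor f (k + 1)) :=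
  map_factor_lift ..

lemma map_divXSubRoot_factor_adjoinRootToDivXSubRoot :
    (divXSubRoot (factor f (k + 1))).map (adjoinRootToDivXSubRoot f k) =
      factor (divXSubRoot f) k := by
  have h := congr_arg (Polynomial.map (adjoinRootToDivXSubRoot f k))
    (X_sub_C_root_mul_divXSubRoot (factor f (k + 1)))
  rw [Polynomial.map_mul, Polynomial.map_sub, map_X, map_C, adjoinRootToDivXSubRoot_root,
    Polynomial.map_map, adjoinRootToDivXSubRoot_comp_of, map_factor_toDivXSubRoot] at h
  exact (monic_X_sub_C α).isRegular.left h

lemma divXSubRootToAdjoinRoot_comp_algebraMap :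
    (divXSubRootToAdjoinRoot f k).comp (algebraMap R T) = algebraMap R L := by
  ext r
  rw [RingHom.comp_apply, IsScalarTower.algebraMap_apply R (AdjoinRoot f) T,
    divXSubRootToAdjoinRoot, lift_algebraMap, adjoinRootMapRoot, AdjoinRoot.algebraMap_eq,
    AdjoinRoot.lift_of]

lemma adjoinRootToDivXSubRoot_comp_algebraMap :
    (adjoinRootToDivXSubRoot f k).comp (algebraMap R L) = algebraMap R T := by
  rw [IsScalarTower.algebraMap_eq R Q L, ← RingHom.comp_assoc, AdjoinRoot.algebraMap_eq,
    adjoinRootToDivXSubRoot_comp_of]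
  exact lift_comp_algebraMap ..

lemma divXSubRootToAdjoinRoot_comp_adjoinRootToDivXSubRoot :
    (divXSubRootToAdjoinRoot f k).comp (adjoinRootToDivXSubRoot f k) = RingHom.id L := by
  refine AdjoinRoot.ringHom_ext (UniversalFactorRing.ringHom_ext ?_ ?_) ?_
  · rw [RingHom.id_comp, RingHom.comp_assoc, ← AdjoinRoot.algebraMap_eq,
      ← IsScalarTower.algebraMap_eq, RingHom.comp_assoc, adjoinRootToDivXSubRoot_comp_algebraMap,
      divXSubRootToAdjoinRoot_comp_algebraMap]
  · rw [RingHom.id_comp, RingHom.comp_assoc, adjoinRootToDivXSubRoot_comp_of,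
      ← Polynomial.map_map, map_factor_toDivXSubRoot, Polynomial.map_mul, Polynomial.map_sub,
      map_X, map_C, divXSubRootToAdjoinRoot_root, map_factor_divXSubRootToAdjoinRoot,
      X_sub_C_root_mul_divXSubRoot]
  · rw [RingHom.comp_apply, adjoinRootToDivXSubRoot_root, divXSubRootToAdjoinRoot_root,
      RingHom.id_apply]

lemma adjoinRootToDivXSubRoot_comp_divXSubRootToAdjoinRoot :
    (adjoinRootToDivXSubRoot f k).comp (divXSubRootToAdjoinRoot f k) = RingHom.id T := by
  refine UniversalFactorRing.ringHom_ext (AdjoinRoot.ringHom_ext ?_ ?_) ?_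
  · rw [RingHom.id_comp, RingHom.comp_assoc, ← AdjoinRoot.algebraMap_eq,
      ← IsScalarTower.algebraMap_eq, RingHom.comp_assoc, divXSubRootToAdjoinRoot_comp_algebraMap,
      adjoinRootToDivXSubRoot_comp_algebraMap]
  · rw [RingHom.comp_apply, RingHom.comp_apply, divXSubRootToAdjoinRoot_root,
      adjoinRootToDivXSubRoot_root, RingHom.id_comp]
  · rw [← Polynomial.map_map, map_factor_divXSubRootToAdjoinRoot,
      map_divXSubRoot_factor_adjoinRootToDivXSubRoot, Polynomial.map_id]

noncomputable def adjoinRootFactorEquiv : L ≃ₐ[R] T :=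
  AlgEquiv.ofRingEquiv (f := RingEquiv.ofRingHom (adjoinRootToDivXSubRoot f k)
      (divXSubRootToAdjoinRoot f k) (adjoinRootToDivXSubRoot_comp_divXSubRootToAdjoinRoot f k)
      (divXSubRootToAdjoinRoot_comp_adjoinRootToDivXSubRoot f k))
    fun r => congr($(adjoinRootToDivXSubRoot_comp_algebraMap f k) r)

lemma succ_mul_rank_eq_rank_divXSubRoot (F : Type*) [Field F] [Algebra F R] :
    ((k + 1 : ℕ) : Cardinal) * Module.rank F Q = Module.rank F T := by
  have := (toDivXSubRoot f k).domain_nontrivial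
  rw [← ((adjoinRootFactorEquiv f k).restrictScalars F).toLinearEquiv.rank_eq,
    rank_adjoinRoot F (monic_factor f (k + 1)), natDegree_factor]

end UniversalFactorRing

theorem rank_universalFactorRing (F : Type*) [Field F] (k : ℕ) {R : Type*} [CommRing R]
    [Nontrivial R] [Algebra F R] {f : R[X]} (hf : f.Monic) :
    Module.rank F (UniversalFactorRing R f k) = f.natDegree.choose k * Module.rank F R := by
  induction k generalizing R with
  | zero => rw [Nat.choose_zero_right, Nat.cast_one, one_mul, UniversalFactorRing.rank_zero]
  | succ k ih =>
    rcases lt_or_ge f.natDegree (k + 1) with hlt | hle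
    · have := UniversalFactorRing.subsingleton_of_natDegree_lt hf hlt
      rw [rank_subsingleton', Nat.choose_eq_zero_of_lt hlt, Nat.cast_zero, zero_mul]
    obtain ⟨n, hn⟩ : ∃ n, f.natDegree = n + 1 := ⟨f.natDegree - 1, by omega⟩
    have hR' : Module.rank F (AdjoinRoot f) = (n + 1 : ℕ) * Module.rank F R := by
      rw [rank_adjoinRoot F hf, hn]
    have : Nontrivial (AdjoinRoot f) :=
      (rank_pos_iff_nontrivial (R := F)).mp (by simp [hR', rank_pos])
    have hT := ih (monic_divXSubRoot hf)
    rw [natDegree_divXSubRoot hf, hn, Nat.add_sub_cancel, hR'] at hT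
    have : Nontrivial (UniversalFactorRing (AdjoinRoot f) (divXSubRoot f) k) :=
      (rank_pos_iff_nontrivial (R := F)).mp
        (by simp [hT, rank_pos, Nat.choose_pos (by omega : k ≤ n)])
    have hchoose : (k + 1) * (n + 1).choose (k + 1) = n.choose k * (n + 1) := by
      rw [mul_comm, ← Nat.add_one_mul_choose_eq, mul_comm]
    rw [← Cardinal.natCast_mul_inj (Nat.succ_ne_zero k),
      UniversalFactorRing.succ_mul_rank_eq_rank_divXSubRoot, hT, hn, ← mul_assoc, ← mul_assoc,
      ← Nat.cast_mul, ← Nat.cast_mul, hchoose]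

/-- Theorem 2.2: if `F` is a field, `R` a nonzero commutative `F`-algebra, and `f ∈ R[x]`
is monic of degree `n`, then for every `k ≥ 0` we have
`dim_F (R_{f,k}) = (n choose k) · dim_F R`. -/
theorem stmt_2 (F : Type*) [Field F] (R : Type*) [CommRing R] [Nontrivial R] [Algebra F R]
    (f : Polynomial R) (hf : f.Monic) (n : ℕ) (hdeg : f.natDegree = n) (k : ℕ) :
    Module.rank F (UniversalFactorRing R f k) = (n.choose k : Cardinal) * Module.rank F R := by
  subst hdeg
  exact rank_universalFactorRing F k hf
end

section
/- Let R and R' be commutative rings, let φ : R → R' be a unital ring homomorphism, let f ∈ R[x] be monic of degree n, and let k ≥ 0. Suppose g'(x) ∈ R'[x] is a monic polynomial of degree k that divides the image φ(f) in R'[x]. Extend φ to a ring homomorphism φ' : R[b₀,…,b_{k-1}] → R' by sending each indeterminate b_j to the coefficient of x^j in g'(x). Then the ideal I (generated by the coefficients of the remainder of f upon division by the generic monic g(x) = x^k + b_{k-1}x^{k-1} + ⋯ + b₀) is contained in the kernel of φ'; equivalently, φ' factors through R_{f,k} = R[b₀,…,b_{k-1}]/I. -/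
open Polynomial

lemma genericMonic_monic (R : Type*) [CommRing R] (k : ℕ) : (genericMonic R k).Monic := by
  apply Polynomial.monic_X_pow_add
  apply lt_of_le_of_lt (Polynomial.degree_sum_le _ _)
  rw [Finset.sup_lt_iff (by exact_mod_cast WithBot.bot_lt_coe k)]
  intro j _
  calc Polynomial.degree (Polynomial.C (MvPolynomial.X j) * Polynomial.X ^ (j : ℕ))
      ≤ (j : ℕ) := by
        simpa using Polynomial.degree_C_mul_X_pow_le (j : ℕ) (MvPolynomial.X j)
    _ < (k : WithBot ℕ) := by exact_mod_cast j.isLt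

/-- Universal property of `R_{f,k}`: if `φ : R →+* R'`, `f ∈ R[x]` is monic, and
`g' ∈ R'[x]` is a monic polynomial of degree `k` dividing `φ(f)`, then the extension
`φ'` of `φ` sending `b_j ↦ coeff of x^j in g'` kills the ideal `I`, i.e. `φ'` factors
through `R_{f,k} = R[b_0,…,b_{k-1}]/I`. -/
theorem stmt_3 (R R' : Type*) [CommRing R] [CommRing R'] (φ : R →+* R')
    (f : Polynomial R) (hf : f.Monic) (n : ℕ) (hdeg : f.natDegree = n) (k : ℕ)
    (g' : Polynomial R') (hg' : g'.Monic) (hg'deg : g'.natDegree = k)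
    (hdvd : g' ∣ f.map φ) :
    univRemainderIdeal R f k ≤
      RingHom.ker (MvPolynomial.eval₂Hom φ (fun j : Fin k => g'.coeff (j : ℕ))) := by
  set ψ : MvPolynomial (Fin k) R →+* R' :=
    MvPolynomial.eval₂Hom φ (fun j : Fin k => g'.coeff (j : ℕ)) with hψ
  -- the map sends the generic monic to g'
  have hmap : (genericMonic R k).map ψ = g' := by
    have h1 : (genericMonic R k).map ψ
        = Polynomial.X ^ k + ∑ j : Fin k, Polynomial.C (g'.coeff (j : ℕ)) * Polynomial.X ^ (j : ℕ) := by
      simp [genericMonic, Polynomial.map_sum, hψ]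
    rw [h1]
    ext m
    rw [Polynomial.coeff_add, Polynomial.coeff_X_pow, Polynomial.finset_sum_coeff]
    have h2 : ∀ j : Fin k,
        (Polynomial.C (g'.coeff (j : ℕ)) * Polynomial.X ^ (j : ℕ)).coeff m
          = if m = (j : ℕ) then g'.coeff (j : ℕ) else 0 := by
      intro j; simp [Polynomial.coeff_C_mul, Polynomial.coeff_X_pow]
    simp_rw [h2]
    rcases lt_trichotomy m k with hm | hm | hm
    · rw [if_neg hm.ne, Finset.sum_eq_single (⟨m, hm⟩ : Fin k)]
      · simp
      · intro j _ hj
        rw [if_neg]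
        intro h
        exact hj (Fin.ext h.symm)
      · simp
    · subst hm
      rw [if_pos rfl, Finset.sum_eq_zero, add_zero]
      · rw [← hg'deg]; exact (hg'.coeff_natDegree).symm
      · intro j _; rw [if_neg (Nat.ne_of_lt j.isLt).symm]
    · rw [if_neg hm.ne', Finset.sum_eq_zero, add_zero]
      · exact (Polynomial.coeff_eq_zero_of_natDegree_lt (by omega)).symm
      · intro j _; rw [if_neg (by omega)]
  -- the map sends f's base-change to f.map φ
  have hfmap : (f.map (algebraMap R (MvPolynomial (Fin k) R))).map ψ = f.map φ := by
    rw [Polynomial.map_map]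
    congr 1
    ext r
    simp [hψ]
  rw [Ideal.span_le]
  rintro _ ⟨i, rfl⟩
  simp only [SetLike.mem_coe, RingHom.mem_ker]
  have key : ((f.map (algebraMap R (MvPolynomial (Fin k) R))) %ₘ genericMonic R k).map ψ = 0 := by
    rw [Polynomial.map_modByMonic ψ (genericMonic_monic R k), hmap, hfmap,
      (Polynomial.modByMonic_eq_zero_iff_dvd hg').mpr hdvd]
  calc ψ (((f.map (algebraMap R (MvPolynomial (Fin k) R))) %ₘ genericMonic R k).coeff i)
      = (((f.map (algebraMap R (MvPolynomial (Fin k) R))) %ₘ genericMonic R k).map ψ).coeff i := by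
        rw [Polynomial.coeff_map]
    _ = 0 := by rw [key]; simp
end

section
/- Let F be a field in which -1 is a square, i.e. there exists i ∈ F with i² = -1. If every polynomial over F of prime degree has a root in F, and every element of F has a square root in F, then F is algebraically closed. -/
/-!
Let `M` be the additive monoid of degrees of polynomials over `F` without a root in `F`; by
hypothesis `M` contains no prime. If `K/F` is finite Galois of degree `n` and `q ^ k ∣ n`, a
subgroup of order `q ^ k` of the Galois group (Sylow) has a fixed field of degree `n / q ^ k`,
and the minimal polynomial of a primitive element shows `n / q ^ k ∈ M` unless it is `1`.
A submonoid of `ℕ` containing no prime has all its elements divisible by a single prime `r`,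
and the cofactors `n / r ^ k` then force `n = 1`. Since `X ^ p - a` has a root, `F` is perfect,
so splitting fields are Galois and every irreducible polynomial has degree `1`.
-/

open Polynomial IntermediateField Module

namespace AddSubmonoid

/-- If the gcd of `M` were `1`, `M` would contain every large integer, hence a prime. -/
theorem exists_prime_forall_dvd_of_forall_not_prime (M : AddSubmonoid ℕ)
    (hM : ∀ n ∈ M, ¬ n.Prime) : ∃ r, r.Prime ∧ ∀ n ∈ M, r ∣ n := by
  have hgcd : Nat.setGcd M ≠ 1 := by
    intro h
    obtain ⟨N, hN⟩ := Nat.exists_mem_closure_of_ge (M : Set ℕ)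
    obtain ⟨P, hPN, hP⟩ := Nat.exists_infinite_primes N
    have hPM : P ∈ M := by simpa using hN P hPN (h ▸ one_dvd P)
    exact hM P hPM hP
  obtain ⟨r, hr, hrg⟩ := Nat.exists_prime_and_dvd hgcd
  exact ⟨r, hr, fun n hn => hrg.trans (Nat.setGcd_dvd_of_mem hn)⟩

/-- With `r` dividing all of `M`, the cofactor `n / r ^ v` (`v` the `r`-adic valuation) is prime
to `r`, so it is `1`; then `n = r ^ v` and the cofactor `n / r ^ (v - 1) = r` would be a prime
in `M`. -/
theorem eq_one_of_forall_cofactor_mem (M : AddSubmonoid ℕ) (hM : ∀ n ∈ M, ¬ n.Prime) {n : ℕ}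
    (hn : n ≠ 0) (h : ∀ q k d, q.Prime → d * q ^ k = n → d ≠ 1 → d ∈ M) : n = 1 := by
  by_contra hn1
  obtain ⟨r, hr, hrM⟩ := M.exists_prime_forall_dvd_of_forall_not_prime hM
  have hrn : r ∣ n := hrM n (h r 0 n hr (by simp) hn1)
  have hcompl : ordCompl[r] n = 1 := by
    by_contra hne
    exact Nat.not_dvd_ordCompl hr hn
      (hrM _ (h r _ _ hr (by rw [mul_comm]; exact Nat.ordProj_mul_ordCompl_eq_self n r) hne))
  have hv : 1 ≤ n.factorization r := (hr.dvd_iff_one_le_factorization hn).mp hrn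
  refine hM r (h r (n.factorization r - 1) r hr ?_ hr.one_lt.ne') hr
  rw [← pow_succ', Nat.sub_add_cancel hv]
  simpa [hcompl] using Nat.ordProj_mul_ordCompl_eq_self n r

end AddSubmonoid

universe u

section

variable (F : Type u) [Field F]

def rootlessDegrees : AddSubmonoid ℕ where
  carrier := {n | ∃ f : F[X], f.natDegree = n ∧ ∀ a, ¬ f.IsRoot a}
  zero_mem' := ⟨1, natDegree_one, fun a => by simp⟩
  add_mem' := by
    rintro _ _ ⟨f, rfl, hf⟩ ⟨g, rfl, hg⟩
    have hf0 : f ≠ 0 := by rintro rfl; exact hf 0 (by simp)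
    have hg0 : g ≠ 0 := by rintro rfl; exact hg 0 (by simp)
    refine ⟨f * g, natDegree_mul hf0 hg0, fun a ha => ?_⟩
    rcases root_mul.mp ha with ha | ha
    exacts [hf a ha, hg a ha]

variable {F}

theorem not_prime_of_mem_rootlessDegrees
    (hroots : ∀ f : F[X], f.natDegree.Prime → ∃ a : F, f.eval a = 0) {n : ℕ}
    (hn : n ∈ rootlessDegrees F) : ¬ n.Prime := by
  obtain ⟨f, rfl, hf⟩ := hn
  intro hp
  obtain ⟨a, ha⟩ := hroots f hp
  exact hf a ha

theorem finrank_mem_rootlessDegrees {L : Type*} [Field L] [Algebra F L] [FiniteDimensional F L]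
    [Algebra.IsSeparable F L] (h : finrank F L ≠ 1) : finrank F L ∈ rootlessDegrees F := by
  let pb := Field.powerBasisOfFiniteOfSeparable F L
  have hdeg : (minpoly F pb.gen).natDegree = finrank F L := by
    rw [pb.natDegree_minpoly, pb.finrank]
  refine ⟨minpoly F pb.gen, hdeg, fun a ha => h ?_⟩
  rw [← hdeg, natDegree_eq_of_degree_eq_some
    (degree_eq_one_of_irreducible_of_root (minpoly.irreducible pb.isIntegral_gen) ha)]
  rfl

theorem IsGalois.exists_intermediateField_finrank_mul_pow_eq {K : Type*} [Field K] [Algebra F K]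
    [FiniteDimensional F K] [IsGalois F K] {q k : ℕ} (hq : q.Prime) (hk : q ^ k ∣ finrank F K) :
    ∃ L : IntermediateField F K, finrank F L * q ^ k = finrank F K := by
  have : Fact q.Prime := ⟨hq⟩
  obtain ⟨H, hH⟩ := Sylow.exists_subgroup_card_pow_prime (G := K ≃ₐ[F] K) q
    (by rwa [IsGalois.card_aut_eq_finrank])
  refine ⟨fixedField H, ?_⟩
  rw [← hH, ← finrank_fixedField_eq_card H, finrank_mul_finrank]

theorem finrank_eq_one_of_isGalois_of_forall_prime_exists_root
    (hroots : ∀ f : F[X], f.natDegree.Prime → ∃ a : F, f.eval a = 0)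
    (K : Type*) [Field K] [Algebra F K] [FiniteDimensional F K] [IsGalois F K] :
    finrank F K = 1 := by
  refine (rootlessDegrees F).eq_one_of_forall_cofactor_mem
    (fun _ => not_prime_of_mem_rootlessDegrees hroots) finrank_pos.ne' fun q k d hq hd hd1 => ?_
  obtain ⟨L, hL⟩ := IsGalois.exists_intermediateField_finrank_mul_pow_eq hq (hd ▸ dvd_mul_left _ _)
  have hLd : finrank F L = d := Nat.eq_of_mul_eq_mul_right (pow_pos hq.pos k) (hL.trans hd.symm)
  exact hLd ▸ finrank_mem_rootlessDegrees (hLd ▸ hd1)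

theorem PerfectField.of_forall_exists_pow_eq (h : ∀ p : ℕ, p.Prime → ∀ a : F, ∃ b, b ^ p = a) :
    PerfectField F := by
  obtain ⟨p, hp⟩ := ExpChar.exists F
  have : PerfectRing F p := PerfectRing.ofSurjective F p fun a => by
    rcases expChar_is_prime_or_one F p with hprime | rfl
    · simpa [frobenius_def] using h p hprime a
    · exact ⟨a, by simp [frobenius_def]⟩
  exact PerfectRing.toPerfectField F p

theorem IsAlgClosed.of_forall_isGalois_finrank_eq_one [PerfectField F]
    (h : ∀ (K : Type u) [Field K] [Algebra F K] [FiniteDimensional F K] [IsGalois F K],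
      finrank F K = 1) : IsAlgClosed F := by
  refine IsAlgClosed.of_exists_root F fun p hmon hirr => exists_root_of_degree_eq_one ?_
  let K := p.SplittingField
  have : IsGalois F K := ⟨⟩
  obtain ⟨β, hβ⟩ := (SplittingField.splits p).exists_eval_eq_zero
    (by rw [degree_map]; exact hirr.degree_pos.ne')
  have hmin : p = minpoly F β :=
    minpoly.eq_of_irreducible_of_monic hirr (by rwa [aeval_def, eval₂_eq_eval_map]) hmon
  have hle : p.natDegree ≤ 1 := hmin ▸ (minpoly.natDegree_le β).trans (h K).le
  rw [degree_eq_natDegree hirr.ne_zero]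
  exact_mod_cast le_antisymm hle hirr.natDegree_pos

end

theorem stmt_8_general (F : Type*) [Field F]
    (hroots : ∀ f : Polynomial F, f.natDegree.Prime → ∃ a : F, f.eval a = 0) :
    IsAlgClosed F := by
  have : PerfectField F := PerfectField.of_forall_exists_pow_eq fun p hp a => by
    obtain ⟨b, hb⟩ := hroots (X ^ p - C a) (by rwa [natDegree_X_pow_sub_C])
    exact ⟨b, by simpa [sub_eq_zero] using hb⟩
  exact IsAlgClosed.of_forall_isGalois_finrank_eq_one fun K _ _ _ _ =>
    finrank_eq_one_of_isGalois_of_forall_prime_exists_root hroots K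

/-- Case 2 of the proof of Theorem 3.1: if `-1` is a square in `F`, every polynomial of
prime degree over `F` has a root in `F`, and every element of `F` has a square root in
`F`, then `F` is algebraically closed. -/
theorem stmt_8 (F : Type*) [Field F] (i : F) (hi : i ^ 2 = -1)
    (hroots : ∀ f : Polynomial F, f.natDegree.Prime → ∃ a : F, f.eval a = 0)
    (hsq : ∀ x : F, ∃ y : F, y ^ 2 = x) :
    IsAlgClosed F :=
  stmt_8_general F hroots
end

section
/- Let F be a field of characteristic different from 2 in which -1 is not a square (so x² + 1 is irreducible over F). If every polynomial over F of odd prime degree has a root in F, then every polynomial over F of odd degree has a root in F; equivalently, the only irreducible polynomials of odd degree over F are the linear ones. -/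
/-- First paragraph of Case 1 of the proof of Theorem 3.1: if `char F ≠ 2` and `-1` is
not a square in `F` (so `x² + 1` is irreducible over `F`), and every polynomial of odd
prime degree over `F` has a root in `F`, then every polynomial of odd degree over `F`
has a root in `F`. -/
theorem stmt_9 (F : Type*) [Field F] (hchar : ringChar F ≠ 2)
    (hsq : ¬ ∃ i : F, i ^ 2 = -1)
    (h : ∀ f : Polynomial F, f.natDegree.Prime → Odd f.natDegree → ∃ a : F, f.eval a = 0) :
    ∀ f : Polynomial F, Odd f.natDegree → ∃ a : F, f.eval a = 0 := by
  intro f hodd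
  set n := f.natDegree with hn
  have hf0 : f ≠ 0 := by
    intro h0
    rw [hn, h0, Polynomial.natDegree_zero] at hodd
    simp at hodd
  -- choose an odd prime p ≥ n
  obtain ⟨p, hp_ge, hp⟩ := Nat.exists_infinite_primes (max n 3)
  have hpn : n ≤ p := le_trans (le_max_left _ _) hp_ge
  have hp3 : 3 ≤ p := le_trans (le_max_right _ _) hp_ge
  have hp_odd : Odd p := hp.odd_of_ne_two (by omega)
  -- p - n is even
  have heven : 2 ∣ (p - n) := by
    rcases hodd with ⟨a, ha⟩
    rcases hp_odd with ⟨b, hb⟩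
    omega
  obtain ⟨k, hk⟩ := heven
  -- the auxiliary polynomial
  have hq0 : (Polynomial.X ^ 2 + Polynomial.C (1 : F)) ≠ 0 := by
    intro h0
    have := Polynomial.natDegree_X_pow_add_C (n := 2) (r := (1 : F))
    rw [h0] at this
    simp at this
  set g : Polynomial F := f * (Polynomial.X ^ 2 + Polynomial.C (1 : F)) ^ k with hg
  have hdegq : (Polynomial.X ^ 2 + Polynomial.C (1 : F)).natDegree = 2 :=
    Polynomial.natDegree_X_pow_add_C
  have hdegg : g.natDegree = p := by
    rw [hg, Polynomial.natDegree_mul hf0 (pow_ne_zero _ hq0),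
      Polynomial.natDegree_pow, hdegq]
    omega
  obtain ⟨a, ha⟩ := h g (hdegg ▸ hp) (hdegg ▸ hp_odd)
  refine ⟨a, ?_⟩
  rw [hg, Polynomial.eval_mul, Polynomial.eval_pow] at ha
  rcases mul_eq_zero.mp ha with h1 | h2
  · exact h1
  · exfalso
    apply hsq
    rcases Nat.eq_zero_or_pos k with hk0 | hk0
    · rw [hk0] at h2; simp at h2
    have := pow_eq_zero_iff hk0.ne' |>.mp h2
    simp at this
    exact ⟨a, by linear_combination this⟩
end
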